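/- Let N ≥ n_x be positive integers, A ∈ ℝ^{n_x×n_x}, B ∈ ℝ^{n_x×2}, let ξ ∈ ℝ² be a unit vector, 0 < γ < 1, 0 < ρ_min ≤ ρ_max. Let a, b ∈ ℝ² be the two distinct unit vectors with ⟪ξ, a⟫ = ⟪ξ, b⟫ = γ. Assume that for each w ∈ {a, b} and every choice of n_x distinct indices P₁, …, P_{n_x} ∈ {1, …, N}, the matrix [A^{N−P₁}Bw, …, A^{N−P_{n_x}}Bw] has rank n_x. Let η ∈ ℝ^{n_x} be nonzero, and let σ₁, …, σ_N ∈ [ρ_min, ρ_max] and u₁, …, u_N ∈ ℝ² satisfy, for every i ∈ {1, …, N}: uᵢ ∈ W(σᵢ) and −Bᵀ(Aᵀ)^{N−i}η ∈ N_{W(σᵢ)}(uᵢ). Then the number of indices i ∈ {1, …, N} at which it is NOT the case that (uᵢ = 0, or (ρ_min ≤ ‖uᵢ‖ ≤ ρ_max and ⟪ξ, uᵢ⟫ ≥ γ‖uᵢ‖)) is at most 2n_x − 2. -/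

import Mathlib

open RealInnerProductSpace Matrix

open scoped Classical

/-!
At a bad index `i` the control `uᵢ` is nonzero and `‖uᵢ‖ < ρmin ≤ σᵢ`, so it stays away from the
round part of the boundary of `W(σᵢ)`. Scaling `uᵢ` slightly up and down keeps it in the sector,
which forces the multiplier `qᵢ = Bᵀ(Aᵀ)^{N-i}η` to be orthogonal to `uᵢ`. If `uᵢ` is interior
then `qᵢ = 0`; otherwise `uᵢ` points along one of the two edges `a`, `b`. Either way
`ηᵀA^{N-i}Bw = 0` for some `w ∈ {a, b}`, and for a fixed `w` this happens at fewer than `n_x`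
indices: `n_x` of them would give a matrix of rank `n_x` annihilated by `ηᵀ ≠ 0`.
-/

/-- Identification of a plain vector in `Fin n → ℝ` with a point of Euclidean space. -/
noncomputable def toE {n : ℕ} (v : Fin n → ℝ) : EuclideanSpace ℝ (Fin n) :=
  (EuclideanSpace.equiv (Fin n) ℝ).symm v

/-- The sector `W(σ) = {u ∈ ℝ² : ‖u‖ ≤ σ ∧ ⟪ξ, u⟫ ≥ γ‖u‖}`. -/
def sector (ξ : EuclideanSpace ℝ (Fin 2)) (γ σ : ℝ) :
    Set (EuclideanSpace ℝ (Fin 2)) :=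
  {w : EuclideanSpace ℝ (Fin 2) | ‖w‖ ≤ σ ∧ γ * ‖w‖ ≤ ⟪ξ, w⟫}

section NormalCone

variable {E : Type*} [NormedAddCommGroup E] [InnerProductSpace ℝ E]

def normalCone (S : Set E) (z : E) : Set E :=
  {v | ∀ y ∈ S, ⟪v, y - z⟫ ≤ 0}

theorem eq_zero_of_mem_normalCone_of_mem_interior {S : Set E} {z v : E}
    (hv : v ∈ normalCone S z) (hz : z ∈ interior S) : v = 0 := by
  have hlim : Filter.Tendsto (fun t : ℝ => z + t • v) (nhdsWithin 0 (Set.Ioi 0)) (nhds z) := by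
    have hcont : Continuous fun t : ℝ => z + t • v := by fun_prop
    simpa using (hcont.tendsto 0).mono_left nhdsWithin_le_nhds
  obtain ⟨t, hzS, ht⟩ :=
    ((hlim.eventually (mem_interior_iff_mem_nhds.mp hz)).and self_mem_nhdsWithin).exists
  have := hv _ hzS
  rw [add_sub_cancel_left, real_inner_smul_right] at this
  exact real_inner_self_nonpos.mp (nonpos_of_mul_nonpos_right this ht)

end NormalCone

theorem eq_or_eq_of_norm_eq_one_of_inner_eq {E : Type*} [NormedAddCommGroup E]
    [InnerProductSpace ℝ E] [Fact (Module.finrank ℝ E = 2)] {ξ a b x : E} {γ : ℝ}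
    (hξ : ξ ≠ 0) (hab : a ≠ b) (ha : ‖a‖ = 1) (hb : ‖b‖ = 1) (hx : ‖x‖ = 1)
    (haξ : ⟪ξ, a⟫ = γ) (hbξ : ⟪ξ, b⟫ = γ) (hxξ : ⟪ξ, x⟫ = γ) : x = a ∨ x = b := by
  let s : EuclideanGeometry.Sphere E := ⟨0, 1⟩
  have mem_s {y : E} (hy : ‖y‖ = 1) : y ∈ s :=
    EuclideanGeometry.mem_sphere.mpr (by rw [dist_zero_right]; exact hy)
  have mem_line {y : E} (hy : ⟪ξ, y⟫ = γ) : y ∈ AffineSubspace.mk' a (ℝ ∙ (b - a)) := by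
    rw [AffineSubspace.mem_mk', vsub_eq_sub]
    refine Submodule.mem_span_singleton_of_inner_eq_zero_of_inner_eq_zero hξ
      (sub_ne_zero.mpr hab.symm) ?_ ?_ <;> rw [inner_sub_right] <;> linarith
  have hline {y : E} (hy : ⟪ξ, y⟫ = γ) :=
    EuclideanGeometry.Sphere.eq_or_eq_secondInter_of_mem_mk'_span_singleton_iff_mem
      (mem_s ha) (mem_line hy)
  obtain hba | hb' := (hline hbξ).mpr (mem_s hb)
  · exact absurd hba.symm hab
  · rw [hb']
    exact (hline hxξ).mpr (mem_s hx)

local notation "ℝ²" => EuclideanSpace ℝ (Fin 2)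

section Sector

variable {ξ u v : ℝ²} {γ s : ℝ}

theorem smul_mem_sector {t : ℝ} (hu : u ∈ sector ξ γ s) (ht : 0 ≤ t) (hts : t * ‖u‖ ≤ s) :
    t • u ∈ sector ξ γ s := by
  refine ⟨by rwa [norm_smul, Real.norm_of_nonneg ht], ?_⟩
  rw [norm_smul, Real.norm_of_nonneg ht, real_inner_smul_right, mul_left_comm]
  exact mul_le_mul_of_nonneg_left hu.2 ht

theorem mem_interior_sector (hlt : ‖u‖ < s) (hstrict : γ * ‖u‖ < ⟪ξ, u⟫) :
    u ∈ interior (sector ξ γ s) :=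
  interior_maximal (t := {w : ℝ² | ‖w‖ < s} ∩ {w | γ * ‖w‖ < ⟪ξ, w⟫})
    (fun _ hw => show _ ∧ _ from ⟨hw.1.le, hw.2.le⟩)
    ((isOpen_lt continuous_norm continuous_const).inter
      (isOpen_lt (f := fun w : ℝ² => γ * ‖w‖) (g := fun w => ⟪ξ, w⟫)
        (by fun_prop) (by fun_prop))) ⟨hlt, hstrict⟩

theorem inner_eq_zero_of_mem_normalCone_sector (hu : u ∈ sector ξ γ s) (hlt : ‖u‖ < s)
    (hv : v ∈ normalCone (sector ξ γ s) u) : ⟪v, u⟫ = 0 := by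
  rcases eq_or_ne u 0 with rfl | hu0
  · exact inner_zero_right v
  have hn : 0 < ‖u‖ := norm_pos_iff.mpr hu0
  have hs : 0 ≤ s := hn.le.trans hlt.le
  have hshrink := hv (0 • u) (smul_mem_sector hu le_rfl (by simpa using hs))
  have hstretch := hv ((s / ‖u‖) • u)
    (smul_mem_sector hu (div_nonneg hs hn.le) (div_mul_cancel₀ s hn.ne').le)
  rw [zero_smul, zero_sub, inner_neg_right] at hshrink
  rw [show (s / ‖u‖) • u - u = (s / ‖u‖ - 1) • u by rw [sub_smul, one_smul],
    real_inner_smul_right] at hstretch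
  have : 1 < s / ‖u‖ := (one_lt_div hn).mpr hlt
  nlinarith

open EuclideanSpace in
theorem inner_eq_zero_or_of_mem_normalCone_sector {a b : ℝ²} (hξ : ξ ≠ 0) (hab : a ≠ b)
    (ha : ‖a‖ = 1) (hb : ‖b‖ = 1) (haξ : ⟪ξ, a⟫ = γ) (hbξ : ⟪ξ, b⟫ = γ)
    (hu : u ∈ sector ξ γ s) (hu0 : u ≠ 0) (hlt : ‖u‖ < s)
    (hv : v ∈ normalCone (sector ξ γ s) u) : ⟪v, a⟫ = 0 ∨ ⟪v, b⟫ = 0 := by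
  rcases hu.2.lt_or_eq with hstrict | hedge
  · left
    rw [eq_zero_of_mem_normalCone_of_mem_interior hv (mem_interior_sector hlt hstrict),
      inner_zero_left]
  have hn : 0 < ‖u‖ := norm_pos_iff.mpr hu0
  have hdir : ‖u‖⁻¹ • u = a ∨ ‖u‖⁻¹ • u = b :=
    eq_or_eq_of_norm_eq_one_of_inner_eq hξ hab ha hb
      (by rw [norm_smul, norm_inv, norm_norm, inv_mul_cancel₀ hn.ne'])
      haξ hbξ (by rw [real_inner_smul_right, ← hedge, mul_comm γ, inv_mul_cancel_left₀ hn.ne'])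
  have hvdir : ⟪v, ‖u‖⁻¹ • u⟫ = 0 := by
    rw [real_inner_smul_right, inner_eq_zero_of_mem_normalCone_sector hu hlt hv, mul_zero]
  rcases hdir with h | h
  · exact .inl (h ▸ hvdir)
  · exact .inr (h ▸ hvdir)

end Sector

theorem inner_toE_transpose_mulVec {n k : ℕ} (M : Matrix (Fin n) (Fin k) ℝ) (η : Fin n → ℝ)
    (w : EuclideanSpace ℝ (Fin k)) : ⟪toE (Mᵀ *ᵥ η), w⟫ = η ⬝ᵥ (M *ᵥ fun t => w t) := by
  rw [EuclideanSpace.inner_eq_star_dotProduct, dotProduct_mulVec, mulVec_transpose,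
    dotProduct_comm]
  rfl

theorem Matrix.eq_zero_of_vecMul_eq_zero_of_rank_eq_card {K m : Type*} [Field K] [Fintype m]
    [DecidableEq m] {M : Matrix m m K} (hM : M.rank = Fintype.card m) {v : m → K}
    (hv : v ᵥ* M = 0) : v = 0 := by
  have hsurj : Function.Surjective Mᵀ.mulVecLin := by
    rw [← LinearMap.range_eq_top]
    apply Submodule.eq_top_of_finrank_eq
    rw [← Matrix.rank, rank_transpose, hM, Module.finrank_fintype_fun_eq_card]
  exact LinearMap.injective_iff_surjective.mpr hsurj (by simpa [mulVec_transpose] using hv)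

theorem card_filter_dotProduct_eq_zero_lt {K ι m : Type*} [Field K] [Fintype m] [DecidableEq m]
    (s : Finset ι) (c : ι → m → K)
    (hc : ∀ P : m → ι, (∀ j, P j ∈ s) → Function.Injective P →
      (Matrix.of fun r j => c (P j) r).rank = Fintype.card m)
    {η : m → K} (hη : η ≠ 0) : (s.filter fun i => η ⬝ᵥ c i = 0).card < Fintype.card m := by
  by_contra! hcard
  obtain ⟨f⟩ := Function.Embedding.nonempty_of_card_le (hcard.trans_eq (Fintype.card_coe _).symm)
  have hf j := Finset.mem_filter.mp (f j).2
  refine hη (eq_zero_of_vecMul_eq_zero_of_rank_eq_card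
    (hc (fun j => f j) (fun j => (hf j).1) (Subtype.coe_injective.comp f.injective)) ?_)
  funext j
  simpa [vecMul, dotProduct, mul_comm] using (hf j).2

theorem stmt_13_general (nx N : ℕ)
    (A : Matrix (Fin nx) (Fin nx) ℝ) (B : Matrix (Fin nx) (Fin 2) ℝ)
    (ξ : EuclideanSpace ℝ (Fin 2)) (hξ : ‖ξ‖ = 1)
    (γ ρmin ρmax : ℝ)
    (a b : EuclideanSpace ℝ (Fin 2)) (hab : a ≠ b)
    (ha : ‖a‖ = 1) (hb : ‖b‖ = 1) (haξ : ⟪ξ, a⟫ = γ) (hbξ : ⟪ξ, b⟫ = γ)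
    (hrank : ∀ w ∈ ({a, b} : Set (EuclideanSpace ℝ (Fin 2))),
      ∀ P : Fin nx → ℕ, (∀ j, P j ∈ Finset.Icc 1 N) → Function.Injective P →
        (Matrix.of fun r (j : Fin nx) =>
          ((A ^ (N - P j)) *ᵥ (B *ᵥ fun t => w t)) r).rank = nx)
    (η : Fin nx → ℝ) (hη : η ≠ 0)
    (σ : ℕ → ℝ) (u : ℕ → EuclideanSpace ℝ (Fin 2))
    (hσ : ∀ i ∈ Finset.Icc 1 N, σ i ∈ Set.Icc ρmin ρmax)
    (hu : ∀ i ∈ Finset.Icc 1 N, u i ∈ sector ξ γ (σ i))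
    (hnc : ∀ i ∈ Finset.Icc 1 N, ∀ y ∈ sector ξ γ (σ i),
      ⟪-toE ((Bᵀ * (Aᵀ) ^ (N - i)) *ᵥ η), y - u i⟫ ≤ 0) :
    ((Finset.Icc 1 N).filter fun i =>
      ¬(u i = 0 ∨ (ρmin ≤ ‖u i‖ ∧ ‖u i‖ ≤ ρmax ∧ γ * ‖u i‖ ≤ ⟪ξ, u i⟫))).card
      ≤ 2 * nx - 2 := by
  let Z (w : ℝ²) :=
    (Finset.Icc 1 N).filter fun i => η ⬝ᵥ (A ^ (N - i) *ᵥ (B *ᵥ fun t => w t)) = 0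
  have hZ : ∀ w ∈ ({a, b} : Set ℝ²), (Z w).card < nx := fun w hw => by
    have := card_filter_dotProduct_eq_zero_lt (Finset.Icc 1 N)
      (fun i => A ^ (N - i) *ᵥ (B *ᵥ fun t => w t))
      (by rw [Fintype.card_fin]; exact hrank w hw) hη
    rwa [Fintype.card_fin] at this
  have mem_Z {i w} (hi : i ∈ Finset.Icc 1 N)
      (h : ⟪-toE ((Bᵀ * (Aᵀ) ^ (N - i)) *ᵥ η), w⟫ = 0) : i ∈ Z w := by
    rw [inner_neg_left, neg_eq_zero, ← transpose_pow, ← transpose_mul,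
      inner_toE_transpose_mulVec, ← mulVec_mulVec] at h
    exact Finset.mem_filter.mpr ⟨hi, h⟩
  have hξ0 : ξ ≠ 0 := norm_ne_zero_iff.mp (by simp [hξ])
  calc _ ≤ (Z a ∪ Z b).card := Finset.card_le_card fun i hi => ?_
    _ ≤ (Z a).card + (Z b).card := Finset.card_union_le _ _
    _ ≤ 2 * nx - 2 := by have := hZ a (by simp); have := hZ b (by simp); omega
  obtain ⟨hi, hbad⟩ := Finset.mem_filter.mp hi
  obtain ⟨hu0, hbad⟩ := not_or.mp hbad
  have hsmall : ‖u i‖ < ρmin :=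
    not_le.mp fun h => hbad ⟨h, (hu i hi).1.trans (hσ i hi).2, (hu i hi).2⟩
  rcases inner_eq_zero_or_of_mem_normalCone_sector hξ0 hab ha hb haξ hbξ (hu i hi) hu0
    (hsmall.trans_le (hσ i hi).1) (hnc i hi) with h | h
  · exact Finset.mem_union_left _ (mem_Z hi h)
  · exact Finset.mem_union_right _ (mem_Z hi h)

/-- under the strengthened controllability condition for both edge directions
`a, b` of the sector, the number of time grid points `i ∈ {1, …, N}` at which it is not the
case that `uᵢ = 0` or (`ρmin ≤ ‖uᵢ‖ ≤ ρmax` and `⟪ξ, uᵢ⟫ ≥ γ‖uᵢ‖`) is at most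
`2n_x − 2`, provided `uᵢ ∈ W(σᵢ)` and `−Bᵀ(Aᵀ)^{N−i}η ∈ N_{W(σᵢ)}(uᵢ)` for each `i`. -/
theorem stmt_13 (nx N : ℕ) (hnx : 0 < nx) (hN : nx ≤ N)
    (A : Matrix (Fin nx) (Fin nx) ℝ) (B : Matrix (Fin nx) (Fin 2) ℝ)
    (ξ : EuclideanSpace ℝ (Fin 2)) (hξ : ‖ξ‖ = 1)
    (γ ρmin ρmax : ℝ) (hγ0 : 0 < γ) (hγ1 : γ < 1) (hρ0 : 0 < ρmin) (hρ : ρmin ≤ ρmax)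
    (a b : EuclideanSpace ℝ (Fin 2)) (hab : a ≠ b)
    (ha : ‖a‖ = 1) (hb : ‖b‖ = 1) (haξ : ⟪ξ, a⟫ = γ) (hbξ : ⟪ξ, b⟫ = γ)
    (hrank : ∀ w ∈ ({a, b} : Set (EuclideanSpace ℝ (Fin 2))),
      ∀ P : Fin nx → ℕ, (∀ j, P j ∈ Finset.Icc 1 N) → Function.Injective P →
        (Matrix.of fun r (j : Fin nx) =>
          ((A ^ (N - P j)) *ᵥ (B *ᵥ fun t => w t)) r).rank = nx)
    (η : Fin nx → ℝ) (hη : η ≠ 0)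
    (σ : ℕ → ℝ) (u : ℕ → EuclideanSpace ℝ (Fin 2))
    (hσ : ∀ i ∈ Finset.Icc 1 N, σ i ∈ Set.Icc ρmin ρmax)
    (hu : ∀ i ∈ Finset.Icc 1 N, u i ∈ sector ξ γ (σ i))
    (hnc : ∀ i ∈ Finset.Icc 1 N, ∀ y ∈ sector ξ γ (σ i),
      ⟪-toE ((Bᵀ * (Aᵀ) ^ (N - i)) *ᵥ η), y - u i⟫ ≤ 0) :
    ((Finset.Icc 1 N).filter fun i =>
      ¬(u i = 0 ∨ (ρmin ≤ ‖u i‖ ∧ ‖u i‖ ≤ ρmax ∧ γ * ‖u i‖ ≤ ⟪ξ, u i⟫))).card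
      ≤ 2 * nx - 2 :=
  stmt_13_general nx N A B ξ hξ γ ρmin ρmax a b hab ha hb haξ hbξ hrank η hη σ u hσ hu hnc
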